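/- arXiv:2409.18531 — 8 statements merged into one kernel-verified Lean document; each statement's English description precedes it below -/
import Mathlib

section
/- Closed form of the Rényi divergence between two labeled multi-Bernoullis (discrete attribute space): for 𝕃 finite, a finite attribute space X, and LMB parameters (r_i, p_i), i = 1,2 with r_i(ℓ) ∈ [0,1), setting f_i(x,ℓ) = r_i(ℓ)p_i(x,ℓ)/(1−r_i(ℓ)), the Rényi divergence of order α ≠ 1 satisfies D_R(π₁‖π₂) = (1/(α−1))·Σ_{ℓ∈𝕃} [ ln(1 + Σ_x f₁(x,ℓ)^α f₂(x,ℓ)^{1−α}) + ln((1−r₁(ℓ))^α (1−r₂(ℓ))^{1−α}) ], where D_R(π₁‖π₂) = (1/(α−1)) ln Σ_{L⊆𝕃} Σ over attribute assignments of π₁^α π₂^{1−α}. -/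
/-!
Both LMB densities factor over labels: an absent label ℓ contributes `1 - r ℓ` and a present one
`(1 - r ℓ) f (x, ℓ)`. Hence `π₁ ^ α π₂ ^ (1 - α)` is again an (unnormalised) LMB-shaped product,
with weight `c ℓ = (1 - r₁ ℓ) ^ α (1 - r₂ ℓ) ^ (1 - α)` and existence factor
`g (x, ℓ) = f₁ (x, ℓ) ^ α f₂ (x, ℓ) ^ (1 - α)`. Summing such a product over all label sets and
attribute assignments gives `∏ ℓ, c ℓ (1 + ∑ x, g (x, ℓ))`, whose logarithm is the sum over labels.
-/

open Finset

theorem Real.finsetProd_rpow_mul_finsetProd_rpow {ι : Type*} (s : Finset ι) {a b : ι → ℝ}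
    (ha : ∀ i ∈ s, 0 ≤ a i) (hb : ∀ i ∈ s, 0 ≤ b i) (α β : ℝ) :
    (∏ i ∈ s, a i) ^ α * (∏ i ∈ s, b i) ^ β = ∏ i ∈ s, a i ^ α * b i ^ β := by
  rw [← Real.finsetProd_rpow s a ha, ← Real.finsetProd_rpow s b hb, prod_mul_distrib]

theorem Real.labeled_prod_rpow_mul_rpow {𝕃 X : Type*} [Fintype 𝕃] (L : Finset 𝕃)
    (x : {a // a ∈ L} → X) {u v : 𝕃 → ℝ} {f₁ f₂ : X → 𝕃 → ℝ}
    (hu : ∀ ℓ, 0 ≤ u ℓ) (hv : ∀ ℓ, 0 ≤ v ℓ) (hf₁ : ∀ x ℓ, 0 ≤ f₁ x ℓ)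
    (hf₂ : ∀ x ℓ, 0 ≤ f₂ x ℓ) (α β : ℝ) :
    ((∏ ℓ, u ℓ) * ∏ ℓ ∈ L.attach, f₁ (x ℓ) ℓ.1) ^ α *
        ((∏ ℓ, v ℓ) * ∏ ℓ ∈ L.attach, f₂ (x ℓ) ℓ.1) ^ β
      = (∏ ℓ, u ℓ ^ α * v ℓ ^ β) * ∏ ℓ ∈ L.attach, f₁ (x ℓ) ℓ.1 ^ α * f₂ (x ℓ) ℓ.1 ^ β := by
  rw [Real.mul_rpow (prod_nonneg fun ℓ _ => hu ℓ) (prod_nonneg fun ℓ _ => hf₁ _ _),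
    Real.mul_rpow (prod_nonneg fun ℓ _ => hv ℓ) (prod_nonneg fun ℓ _ => hf₂ _ _),
    mul_mul_mul_comm,
    Real.finsetProd_rpow_mul_finsetProd_rpow _ (fun ℓ _ => hu ℓ) (fun ℓ _ => hv ℓ),
    Real.finsetProd_rpow_mul_finsetProd_rpow _ (fun ℓ _ => hf₁ _ _) (fun ℓ _ => hf₂ _ _)]

theorem Finset.sum_pi_prod_attach {𝕃 X R : Type*} [DecidableEq 𝕃] [Fintype X] [CommSemiring R]
    (L : Finset 𝕃) (g : X → 𝕃 → R) :
    ∑ x : {a // a ∈ L} → X, ∏ ℓ ∈ L.attach, g (x ℓ) ℓ.1 = ∏ ℓ ∈ L, ∑ x, g x ℓ := by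
  rw [← prod_attach L, ← univ_eq_attach, Fintype.prod_sum]

theorem Finset.sum_finset_prod_eq_prod_one_add {𝕃 R : Type*} [Fintype 𝕃] [CommSemiring R]
    (a : 𝕃 → R) : ∑ L : Finset 𝕃, ∏ ℓ ∈ L, a ℓ = ∏ ℓ, (1 + a ℓ) := by
  rw [prod_one_add, powerset_univ]

theorem Finset.sum_labeled_prod {𝕃 X R : Type*} [Fintype 𝕃] [DecidableEq 𝕃] [Fintype X]
    [CommSemiring R] (c : 𝕃 → R) (g : X → 𝕃 → R) :
    ∑ L : Finset 𝕃, ∑ x : {a // a ∈ L} → X, (∏ ℓ, c ℓ) * ∏ ℓ ∈ L.attach, g (x ℓ) ℓ.1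
      = ∏ ℓ, c ℓ * (1 + ∑ x, g x ℓ) := by
  simp only [← mul_sum, sum_pi_prod_attach, sum_finset_prod_eq_prod_one_add, prod_mul_distrib]

theorem lmb_renyi_divergence_closed_form_general
    {𝕃 X : Type*} [Fintype 𝕃] [DecidableEq 𝕃] [Fintype X]
    (r₁ r₂ : 𝕃 → ℝ) (p₁ p₂ : X → 𝕃 → ℝ)
    (hr₁0 : ∀ ℓ, 0 ≤ r₁ ℓ) (hr₁1 : ∀ ℓ, r₁ ℓ < 1)
    (hr₂0 : ∀ ℓ, 0 ≤ r₂ ℓ) (hr₂1 : ∀ ℓ, r₂ ℓ < 1)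
    (hp₁0 : ∀ x ℓ, 0 ≤ p₁ x ℓ)
    (hp₂0 : ∀ x ℓ, 0 ≤ p₂ x ℓ)
    (α : ℝ)
    (f₁ f₂ : X → 𝕃 → ℝ)
    (hf₁ : ∀ x ℓ, f₁ x ℓ = r₁ ℓ * p₁ x ℓ / (1 - r₁ ℓ))
    (hf₂ : ∀ x ℓ, f₂ x ℓ = r₂ ℓ * p₂ x ℓ / (1 - r₂ ℓ)) :
    (1 / (α - 1)) *
        Real.log
          (∑ L : Finset 𝕃, ∑ x : {a // a ∈ L} → X,
            ((∏ ℓ : 𝕃, (1 - r₁ ℓ)) * ∏ ℓ ∈ L.attach, f₁ (x ℓ) ℓ.1) ^ α *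
              ((∏ ℓ : 𝕃, (1 - r₂ ℓ)) * ∏ ℓ ∈ L.attach, f₂ (x ℓ) ℓ.1) ^ (1 - α))
      = (1 / (α - 1)) *
          ∑ ℓ : 𝕃,
            (Real.log (1 + ∑ x : X, f₁ x ℓ ^ α * f₂ x ℓ ^ (1 - α)) +
              Real.log ((1 - r₁ ℓ) ^ α * (1 - r₂ ℓ) ^ (1 - α))) := by
  have hq₁ : ∀ ℓ, 0 < 1 - r₁ ℓ := fun ℓ => sub_pos.2 (hr₁1 ℓ)
  have hq₂ : ∀ ℓ, 0 < 1 - r₂ ℓ := fun ℓ => sub_pos.2 (hr₂1 ℓ)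
  have hf₁0 : ∀ x ℓ, 0 ≤ f₁ x ℓ := fun x ℓ => by
    rw [hf₁]; exact div_nonneg (mul_nonneg (hr₁0 ℓ) (hp₁0 x ℓ)) (hq₁ ℓ).le
  have hf₂0 : ∀ x ℓ, 0 ≤ f₂ x ℓ := fun x ℓ => by
    rw [hf₂]; exact div_nonneg (mul_nonneg (hr₂0 ℓ) (hp₂0 x ℓ)) (hq₂ ℓ).le
  have hc : ∀ ℓ, 0 < (1 - r₁ ℓ) ^ α * (1 - r₂ ℓ) ^ (1 - α) := fun ℓ => by
    have := hq₁ ℓ; have := hq₂ ℓ; positivity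
  have hmass : ∀ ℓ, 0 < 1 + ∑ x, f₁ x ℓ ^ α * f₂ x ℓ ^ (1 - α) := fun ℓ =>
    add_pos_of_pos_of_nonneg one_pos <| sum_nonneg fun x _ =>
      mul_nonneg (Real.rpow_nonneg (hf₁0 x ℓ) _) (Real.rpow_nonneg (hf₂0 x ℓ) _)
  simp only [Real.labeled_prod_rpow_mul_rpow _ _ (fun ℓ => (hq₁ ℓ).le) (fun ℓ => (hq₂ ℓ).le) hf₁0 hf₂0,
    sum_labeled_prod (fun ℓ => (1 - r₁ ℓ) ^ α * (1 - r₂ ℓ) ^ (1 - α))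
      (fun x ℓ => f₁ x ℓ ^ α * f₂ x ℓ ^ (1 - α))]
  rw [Real.log_prod fun ℓ _ => (mul_pos (hc ℓ) (hmass ℓ)).ne']
  congr 1
  refine sum_congr rfl fun ℓ _ => ?_
  rw [Real.log_mul (hc ℓ).ne' (hmass ℓ).ne', add_comm]

/-- Closed form of the Rényi divergence between two labeled multi-Bernoullis
(discrete attribute space). -/
theorem lmb_renyi_divergence_closed_form
    {𝕃 X : Type*} [Fintype 𝕃] [DecidableEq 𝕃] [Fintype X]
    (r₁ r₂ : 𝕃 → ℝ) (p₁ p₂ : X → 𝕃 → ℝ)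
    (hr₁0 : ∀ ℓ, 0 ≤ r₁ ℓ) (hr₁1 : ∀ ℓ, r₁ ℓ < 1)
    (hr₂0 : ∀ ℓ, 0 ≤ r₂ ℓ) (hr₂1 : ∀ ℓ, r₂ ℓ < 1)
    (hp₁0 : ∀ x ℓ, 0 ≤ p₁ x ℓ) (hp₁1 : ∀ ℓ, ∑ x : X, p₁ x ℓ = 1)
    (hp₂0 : ∀ x ℓ, 0 ≤ p₂ x ℓ) (hp₂1 : ∀ ℓ, ∑ x : X, p₂ x ℓ = 1)
    (α : ℝ) (hα0 : 0 < α) (hα1 : α ≠ 1)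
    (f₁ f₂ : X → 𝕃 → ℝ)
    (hf₁ : ∀ x ℓ, f₁ x ℓ = r₁ ℓ * p₁ x ℓ / (1 - r₁ ℓ))
    (hf₂ : ∀ x ℓ, f₂ x ℓ = r₂ ℓ * p₂ x ℓ / (1 - r₂ ℓ)) :
    (1 / (α - 1)) *
        Real.log
          (∑ L : Finset 𝕃, ∑ x : {a // a ∈ L} → X,
            ((∏ ℓ : 𝕃, (1 - r₁ ℓ)) * ∏ ℓ ∈ L.attach, f₁ (x ℓ) ℓ.1) ^ α *
              ((∏ ℓ : 𝕃, (1 - r₂ ℓ)) * ∏ ℓ ∈ L.attach, f₂ (x ℓ) ℓ.1) ^ (1 - α))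
      = (1 / (α - 1)) *
          ∑ ℓ : 𝕃,
            (Real.log (1 + ∑ x : X, f₁ x ℓ ^ α * f₂ x ℓ ^ (1 - α)) +
              Real.log ((1 - r₁ ℓ) ^ α * (1 - r₂ ℓ) ^ (1 - α))) :=
  lmb_renyi_divergence_closed_form_general r₁ r₂ p₁ p₂ hr₁0 hr₁1 hr₂0 hr₂1 hp₁0 hp₂0 α f₁ f₂ hf₁ hf₂
end

section
/- Closed form of the Kullback-Leibler divergence between two labeled multi-Bernoullis (discrete attribute space): with the setup as for LMBs with r_i(ℓ) ∈ [0,1) and f_i = r_i p_i/(1−r_i), D_KL(π₁‖π₂) = Σ_{ℓ∈𝕃} [ ln((1−r₁(ℓ))/(1−r₂(ℓ))) + (1−r₁(ℓ))·Σ_x f₁(x,ℓ)·ln(f₁(x,ℓ)/f₂(x,ℓ)) ], where D_KL(π₁‖π₂) = Σ_{L⊆𝕃} Σ over attribute assignments of π₁·ln(π₁/π₂), with the convention 0·ln 0 = 0. -/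
/-!
An LMB density is a product over labels: a labeled set with distinct labels is the same as a
partial map `𝕃 → Option X`, and under this identification `π_i` is the product of the laws
`o ↦ (1 - r_i ℓ) · o.elim 1 (f_i · ℓ)` on `Option X`, each of total mass one. The KL divergence
of product laws is the sum of the factorwise divergences (the logarithm of a product splits, and
the other factors marginalise away), and each factor contributes
`ln ((1 - r₁) / (1 - r₂)) + (1 - r₁) Σₓ f₁ ln (f₁ / f₂)`.
-/

open Finset

noncomputable def discreteKL {α : Type*} [Fintype α] (q₁ q₂ : α → ℝ) : ℝ :=
  ∑ a, q₁ a * Real.log (q₁ a / q₂ a)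

theorem sum_pi_prod_mul_apply {ι : Type*} {α : ι → Type*} [Fintype ι] [DecidableEq ι]
    [∀ i, Fintype (α i)]
    (q : ∀ i, α i → ℝ) (hq : ∀ i, ∑ a, q i a = 1) (i : ι) (h : α i → ℝ) :
    ∑ g : ∀ j, α j, (∏ j, q j (g j)) * h (g i) = ∑ a, q i a * h a := by
  -- `w` moves `h` into the `i`-th factor, turning the sum into a product of sums.
  let w : ∀ j, α j → ℝ := fun j a => q j a * if hj : i = j then h (hj ▸ a) else 1
  have hw : ∀ g : ∀ j, α j, ∏ j, w j (g j) = (∏ j, q j (g j)) * h (g i) := by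
    intro g
    rw [prod_mul_distrib, Fintype.prod_dite_eq]
  have hsum : ∀ j ≠ i, ∑ a, w j a = 1 := fun j hj => by
    simpa [w, Ne.symm hj] using hq j
  simp_rw [← hw, ← Fintype.prod_sum, Fintype.prod_eq_single i hsum]
  simp [w]

theorem mul_log_prod_div_prod {ι : Type*} (s : Finset ι) (u v : ι → ℝ)
    (huv : ∀ i ∈ s, v i = 0 → u i = 0) :
    (∏ i ∈ s, u i) * Real.log ((∏ i ∈ s, u i) / ∏ i ∈ s, v i)
      = (∏ i ∈ s, u i) * ∑ i ∈ s, Real.log (u i / v i) := by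
  by_cases hu : ∏ i ∈ s, u i = 0
  · simp [hu]
  have hu' : ∀ i ∈ s, u i ≠ 0 := prod_ne_zero_iff.mp hu
  have hv' : ∀ i ∈ s, v i ≠ 0 := fun i hi hv => hu' i hi (huv i hi hv)
  rw [← prod_div_distrib, Real.log_prod fun i hi => div_ne_zero (hu' i hi) (hv' i hi)]

theorem discreteKL_pi {ι : Type*} {α : ι → Type*} [Fintype ι] [DecidableEq ι]
    [∀ i, Fintype (α i)]
    (q₁ q₂ : ∀ i, α i → ℝ) (hq₁ : ∀ i, ∑ a, q₁ i a = 1)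
    (habs : ∀ i a, q₂ i a = 0 → q₁ i a = 0) :
    discreteKL (fun g : ∀ i, α i => ∏ i, q₁ i (g i)) (fun g => ∏ i, q₂ i (g i))
      = ∑ i, discreteKL (q₁ i) (q₂ i) := by
  simp_rw [discreteKL, mul_log_prod_div_prod _ _ _ fun i _ => habs i _, mul_sum]
  rw [sum_comm]
  exact sum_congr rfl fun i _ =>
    sum_pi_prod_mul_apply q₁ hq₁ i fun a => Real.log (q₁ i a / q₂ i a)

def sigmaToOptionFun {ι α : Type*} [DecidableEq ι] (p : Σ L : Finset ι, L → α) : ι → Option α :=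
  fun i => if h : i ∈ p.1 then some (p.2 ⟨i, h⟩) else none

theorem sigmaToOptionFun_bijective {ι α : Type*} [Fintype ι] [DecidableEq ι] :
    Function.Bijective (sigmaToOptionFun : (Σ L : Finset ι, L → α) → ι → Option α) := by
  constructor
  · rintro ⟨L, x⟩ ⟨L', x'⟩ h
    have hL : L = L' := by
      ext i
      have hi := congrFun h i
      by_cases i ∈ L <;> by_cases i ∈ L' <;> simp_all [sigmaToOptionFun]
    subst hL
    refine Sigma.ext rfl (heq_of_eq (funext fun i => ?_))
    simpa [sigmaToOptionFun, i.2] using congrFun h i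
  · intro g
    refine ⟨⟨univ.filter fun i => (g i).isSome, fun i => (g i).get (mem_filter.mp i.2).2⟩, ?_⟩
    funext i
    cases hg : g i <;> simp [sigmaToOptionFun, hg]

theorem sum_finset_sum_eq_sum_optionFun {ι α M : Type*} [Fintype ι] [DecidableEq ι] [Fintype α]
    [AddCommMonoid M] (F : (ι → Option α) → M) :
    ∑ L : Finset ι, ∑ x : L → α, F (sigmaToOptionFun ⟨L, x⟩) = ∑ g, F g := by
  rw [← Fintype.sum_sigma' fun L x => F (sigmaToOptionFun ⟨L, x⟩)]
  exact sigmaToOptionFun_bijective.sum_comp F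

theorem prod_elim_sigmaToOptionFun {ι α M : Type*} [Fintype ι] [DecidableEq ι] [CommMonoid M]
    (u : α → ι → M) (L : Finset ι) (x : L → α) :
    ∏ i, (sigmaToOptionFun ⟨L, x⟩ i).elim 1 (u · i) = ∏ i ∈ L.attach, u (x i) i := by
  rw [prod_attach_eq_prod_dite]
  exact prod_congr rfl fun i _ => by unfold sigmaToOptionFun; split_ifs <;> rfl

/-- The law of label `ℓ` in an LMB: `none` (label absent) has mass `1 - r`, and `some x` has mass
`(1 - r) f x`, i.e. `r p x`. -/
def lmbTrackLaw {X : Type*} (r : ℝ) (f : X → ℝ) : Option X → ℝ :=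
  fun o => (1 - r) * o.elim 1 f

theorem sum_lmbTrackLaw {X : Type*} [Fintype X] (r : ℝ) (f p : X → ℝ) (hr : r ≠ 1)
    (hf : ∀ x, f x = r * p x / (1 - r)) (hp : ∑ x, p x = 1) :
    ∑ o, lmbTrackLaw r f o = 1 := by
  have hr' : 1 - r ≠ 0 := sub_ne_zero.mpr hr.symm
  have hsome : ∀ x, lmbTrackLaw r f (some x) = r * p x := fun x => by
    rw [lmbTrackLaw, Option.elim_some, hf, mul_div_cancel₀ _ hr']
  rw [Fintype.sum_option, sum_congr rfl fun x _ => hsome x, ← mul_sum, hp]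
  simp [lmbTrackLaw]

theorem discreteKL_lmbTrackLaw {X : Type*} [Fintype X] (r₁ r₂ : ℝ) (f₁ f₂ : X → ℝ)
    (h₁ : ∑ o, lmbTrackLaw r₁ f₁ o = 1) (hr₂ : r₂ ≠ 1) (habs : ∀ x, f₂ x = 0 → f₁ x = 0) :
    discreteKL (lmbTrackLaw r₁ f₁) (lmbTrackLaw r₂ f₂)
      = Real.log ((1 - r₁) / (1 - r₂)) + (1 - r₁) * ∑ x, f₁ x * Real.log (f₁ x / f₂ x) := by
  set c := Real.log ((1 - r₁) / (1 - r₂))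
  have hsome : ∀ x, lmbTrackLaw r₁ f₁ (some x) *
      Real.log (lmbTrackLaw r₁ f₁ (some x) / lmbTrackLaw r₂ f₂ (some x))
        = lmbTrackLaw r₁ f₁ (some x) * c + (1 - r₁) * (f₁ x * Real.log (f₁ x / f₂ x)) := by
    intro x
    simp only [lmbTrackLaw, Option.elim_some]
    by_cases h0 : (1 - r₁) * f₁ x = 0
    · rcases mul_eq_zero.mp h0 with h | h <;> simp [h]
    obtain ⟨hr₁, hf₁⟩ := mul_ne_zero_iff.mp h0
    have hf₂ : f₂ x ≠ 0 := fun h => hf₁ (habs x h)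
    have hr₂' : 1 - r₂ ≠ 0 := sub_ne_zero.mpr hr₂.symm
    rw [mul_div_mul_comm, Real.log_mul (div_ne_zero hr₁ hr₂') (div_ne_zero hf₁ hf₂)]
    ring
  rw [Fintype.sum_option] at h₁
  rw [discreteKL, Fintype.sum_option, sum_congr rfl fun x _ => hsome x, sum_add_distrib,
    ← sum_mul, ← mul_sum]
  simp only [lmbTrackLaw, Option.elim_none, mul_one] at h₁ ⊢
  linear_combination c * h₁

theorem lmbTrackLaw_eq_zero_of_eq_zero {X : Type*} {r₁ r₂ : ℝ} {f₁ f₂ : X → ℝ} (hr₂ : r₂ ≠ 1)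
    (habs : ∀ x, f₂ x = 0 → f₁ x = 0) (o : Option X) (h : lmbTrackLaw r₂ f₂ o = 0) :
    lmbTrackLaw r₁ f₁ o = 0 := by
  cases o with
  | none => simp [lmbTrackLaw, sub_ne_zero.mpr hr₂.symm] at h
  | some x =>
    simp only [lmbTrackLaw, Option.elim_some, mul_eq_zero, sub_ne_zero.mpr hr₂.symm,
      false_or] at h ⊢
    exact Or.inr (habs x h)

theorem prod_lmbTrackLaw_sigmaToOptionFun {ι X : Type*} [Fintype ι] [DecidableEq ι]
    (r : ι → ℝ) (f : X → ι → ℝ) (L : Finset ι) (x : L → X) :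
    ∏ i, lmbTrackLaw (r i) (f · i) (sigmaToOptionFun ⟨L, x⟩ i)
      = (∏ i, (1 - r i)) * ∏ i ∈ L.attach, f (x i) i := by
  simp only [lmbTrackLaw]
  rw [prod_mul_distrib, prod_elim_sigmaToOptionFun]

theorem lmb_kl_divergence_closed_form_general
    {𝕃 X : Type*} [Fintype 𝕃] [DecidableEq 𝕃] [Fintype X]
    (r₁ r₂ : 𝕃 → ℝ) (p₁ : X → 𝕃 → ℝ)
    (hr₁1 : ∀ ℓ, r₁ ℓ < 1)
    (hr₂1 : ∀ ℓ, r₂ ℓ < 1)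
    (hp₁1 : ∀ ℓ, ∑ x : X, p₁ x ℓ = 1)
    (f₁ f₂ : X → 𝕃 → ℝ)
    (hf₁ : ∀ x ℓ, f₁ x ℓ = r₁ ℓ * p₁ x ℓ / (1 - r₁ ℓ))
    (habs : ∀ x ℓ, f₂ x ℓ = 0 → f₁ x ℓ = 0) :
    ∑ L : Finset 𝕃, ∑ x : {a // a ∈ L} → X,
        ((∏ ℓ : 𝕃, (1 - r₁ ℓ)) * ∏ ℓ ∈ L.attach, f₁ (x ℓ) ℓ.1) *
          Real.log
            (((∏ ℓ : 𝕃, (1 - r₁ ℓ)) * ∏ ℓ ∈ L.attach, f₁ (x ℓ) ℓ.1) /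
              ((∏ ℓ : 𝕃, (1 - r₂ ℓ)) * ∏ ℓ ∈ L.attach, f₂ (x ℓ) ℓ.1))
      = ∑ ℓ : 𝕃,
          (Real.log ((1 - r₁ ℓ) / (1 - r₂ ℓ)) +
            (1 - r₁ ℓ) * ∑ x : X, f₁ x ℓ * Real.log (f₁ x ℓ / f₂ x ℓ)) := by
  set q₁ : 𝕃 → Option X → ℝ := fun ℓ => lmbTrackLaw (r₁ ℓ) (f₁ · ℓ)
  set q₂ : 𝕃 → Option X → ℝ := fun ℓ => lmbTrackLaw (r₂ ℓ) (f₂ · ℓ)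
  have hq₁ : ∀ ℓ, ∑ o, q₁ ℓ o = 1 := fun ℓ =>
    sum_lmbTrackLaw _ _ _ (hr₁1 ℓ).ne (fun x => hf₁ x ℓ) (hp₁1 ℓ)
  have hq : ∀ ℓ o, q₂ ℓ o = 0 → q₁ ℓ o = 0 := fun ℓ =>
    lmbTrackLaw_eq_zero_of_eq_zero (hr₂1 ℓ).ne fun x => habs x ℓ
  calc _ = discreteKL (fun g : 𝕃 → Option X => ∏ ℓ, q₁ ℓ (g ℓ)) (fun g => ∏ ℓ, q₂ ℓ (g ℓ)) := by
        simp_rw [← prod_lmbTrackLaw_sigmaToOptionFun r₁ f₁,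
          ← prod_lmbTrackLaw_sigmaToOptionFun r₂ f₂]
        exact sum_finset_sum_eq_sum_optionFun fun g =>
          (∏ ℓ, q₁ ℓ (g ℓ)) * Real.log ((∏ ℓ, q₁ ℓ (g ℓ)) / ∏ ℓ, q₂ ℓ (g ℓ))
    _ = ∑ ℓ, discreteKL (q₁ ℓ) (q₂ ℓ) := discreteKL_pi q₁ q₂ hq₁ hq
    _ = _ := sum_congr rfl fun ℓ _ =>
        discreteKL_lmbTrackLaw _ _ _ _ (hq₁ ℓ) (hr₂1 ℓ).ne fun x => habs x ℓ

/-- Closed form of the Kullback-Leibler divergence between two labeled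
multi-Bernoullis (discrete attribute space). -/
theorem lmb_kl_divergence_closed_form
    {𝕃 X : Type*} [Fintype 𝕃] [DecidableEq 𝕃] [Fintype X]
    (r₁ r₂ : 𝕃 → ℝ) (p₁ p₂ : X → 𝕃 → ℝ)
    (hr₁0 : ∀ ℓ, 0 ≤ r₁ ℓ) (hr₁1 : ∀ ℓ, r₁ ℓ < 1)
    (hr₂0 : ∀ ℓ, 0 ≤ r₂ ℓ) (hr₂1 : ∀ ℓ, r₂ ℓ < 1)
    (hp₁0 : ∀ x ℓ, 0 ≤ p₁ x ℓ) (hp₁1 : ∀ ℓ, ∑ x : X, p₁ x ℓ = 1)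
    (hp₂0 : ∀ x ℓ, 0 ≤ p₂ x ℓ) (hp₂1 : ∀ ℓ, ∑ x : X, p₂ x ℓ = 1)
    (f₁ f₂ : X → 𝕃 → ℝ)
    (hf₁ : ∀ x ℓ, f₁ x ℓ = r₁ ℓ * p₁ x ℓ / (1 - r₁ ℓ))
    (hf₂ : ∀ x ℓ, f₂ x ℓ = r₂ ℓ * p₂ x ℓ / (1 - r₂ ℓ))
    (habs : ∀ x ℓ, f₂ x ℓ = 0 → f₁ x ℓ = 0) :
    ∑ L : Finset 𝕃, ∑ x : {a // a ∈ L} → X,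
        ((∏ ℓ : 𝕃, (1 - r₁ ℓ)) * ∏ ℓ ∈ L.attach, f₁ (x ℓ) ℓ.1) *
          Real.log
            (((∏ ℓ : 𝕃, (1 - r₁ ℓ)) * ∏ ℓ ∈ L.attach, f₁ (x ℓ) ℓ.1) /
              ((∏ ℓ : 𝕃, (1 - r₂ ℓ)) * ∏ ℓ ∈ L.attach, f₂ (x ℓ) ℓ.1))
      = ∑ ℓ : 𝕃,
          (Real.log ((1 - r₁ ℓ) / (1 - r₂ ℓ)) +
            (1 - r₁ ℓ) * ∑ x : X, f₁ x ℓ * Real.log (f₁ x ℓ / f₂ x ℓ)) :=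
  lmb_kl_divergence_closed_form_general r₁ r₂ p₁ hr₁1 hr₂1 hp₁1 f₁ f₂ hf₁ habs
end

section
/- Closed form of the chi-squared divergence between two labeled multi-Bernoullis (discrete attribute space): with LMB parameters (r_i, p_i), r_i(ℓ) ∈ [0,1), f_i = r_i p_i/(1−r_i), and assuming f₂(x,ℓ) > 0 wherever f₁(x,ℓ) > 0, D_{χ²}(π₁‖π₂) = ∏_{ℓ∈𝕃} [ ((1−r₁(ℓ))²/(1−r₂(ℓ))) · (1 + Σ_x f₁(x,ℓ)²/f₂(x,ℓ)) ] − 1, where D_{χ²}(π₁‖π₂) = Σ_{L⊆𝕃} Σ over attribute assignments of π₁²/π₂ − 1, using the convention 0²/0 = 0. -/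
/-- Closed form of the chi-squared divergence between two labeled multi-Bernoullis
(discrete attribute space). -/
theorem lmb_chiSquared_divergence_closed_form
    {𝕃 X : Type*} [Fintype 𝕃] [DecidableEq 𝕃] [Fintype X]
    (r₁ r₂ : 𝕃 → ℝ) (p₁ p₂ : X → 𝕃 → ℝ)
    (hr₁0 : ∀ ℓ, 0 ≤ r₁ ℓ) (hr₁1 : ∀ ℓ, r₁ ℓ < 1)
    (hr₂0 : ∀ ℓ, 0 ≤ r₂ ℓ) (hr₂1 : ∀ ℓ, r₂ ℓ < 1)
    (hp₁0 : ∀ x ℓ, 0 ≤ p₁ x ℓ) (hp₁1 : ∀ ℓ, ∑ x : X, p₁ x ℓ = 1)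
    (hp₂0 : ∀ x ℓ, 0 ≤ p₂ x ℓ) (hp₂1 : ∀ ℓ, ∑ x : X, p₂ x ℓ = 1)
    (f₁ f₂ : X → 𝕃 → ℝ)
    (hf₁ : ∀ x ℓ, f₁ x ℓ = r₁ ℓ * p₁ x ℓ / (1 - r₁ ℓ))
    (hf₂ : ∀ x ℓ, f₂ x ℓ = r₂ ℓ * p₂ x ℓ / (1 - r₂ ℓ))
    (habs : ∀ x ℓ, 0 < f₁ x ℓ → 0 < f₂ x ℓ) :
    ∑ L : Finset 𝕃, ∑ x : {a // a ∈ L} → X,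
        ((∏ ℓ : 𝕃, (1 - r₁ ℓ)) * ∏ ℓ ∈ L.attach, f₁ (x ℓ) ℓ.1) ^ 2 /
          ((∏ ℓ : 𝕃, (1 - r₂ ℓ)) * ∏ ℓ ∈ L.attach, f₂ (x ℓ) ℓ.1) - 1
      = (∏ ℓ : 𝕃,
          ((1 - r₁ ℓ) ^ 2 / (1 - r₂ ℓ)) * (1 + ∑ x : X, f₁ x ℓ ^ 2 / f₂ x ℓ)) - 1 := by
  have key : ∀ L : Finset 𝕃, ∀ x : {a // a ∈ L} → X,
      ((∏ ℓ : 𝕃, (1 - r₁ ℓ)) * ∏ ℓ ∈ L.attach, f₁ (x ℓ) ℓ.1) ^ 2 /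
          ((∏ ℓ : 𝕃, (1 - r₂ ℓ)) * ∏ ℓ ∈ L.attach, f₂ (x ℓ) ℓ.1)
        = (∏ ℓ : 𝕃, (1 - r₁ ℓ) ^ 2 / (1 - r₂ ℓ)) *
            ∏ ℓ ∈ L.attach, f₁ (x ℓ) ℓ.1 ^ 2 / f₂ (x ℓ) ℓ.1 := by
    intro L x
    rw [Finset.prod_div_distrib, Finset.prod_div_distrib, Finset.prod_pow,
      Finset.prod_pow, div_mul_div_comm, ← mul_pow]
  simp only [key, ← Finset.mul_sum]
  rw [Finset.prod_mul_distrib]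
  congr 2
  have hx : ∀ L : Finset 𝕃,
      (∑ x : {a // a ∈ L} → X, ∏ ℓ ∈ L.attach, f₁ (x ℓ) ℓ.1 ^ 2 / f₂ (x ℓ) ℓ.1)
        = ∏ ℓ ∈ L, ∑ x : X, f₁ x ℓ ^ 2 / f₂ x ℓ := by
    intro L
    rw [← Finset.prod_attach L (fun ℓ => ∑ x : X, f₁ x ℓ ^ 2 / f₂ x ℓ),
      ← Finset.univ_eq_attach, Finset.prod_univ_sum, Fintype.piFinset_univ]
  simp only [hx]
  simp_rw [add_comm (1 : ℝ)]
  rw [Finset.prod_add]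
  simp [Finset.powerset_univ]
end

section
/- Closed form of the Cauchy–Schwarz-type divergence between two labeled multi-Bernoullis (discrete attribute space, unit U = 1): with f_i = r_i p_i/(1−r_i) as in the LMB setup, −ln( ⟨π₁,π₂⟩ / (√⟨π₁,π₁⟩·√⟨π₂,π₂⟩) ) = −Σ_{ℓ∈𝕃} ln[ (1 + Σ_x f₁(x,ℓ)f₂(x,ℓ)) / (√(1 + Σ_x f₁(x,ℓ)²)·√(1 + Σ_x f₂(x,ℓ)²)) ], where ⟨π_i,π_j⟩ = Σ_{L⊆𝕃} Σ over attribute assignments of π_i·π_j. -/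
/-!
Both LMB densities are a constant times a product over the present labels, so expanding
`∏ ℓ, (1 + ∑ x, g x ℓ)` over label sets `L` and attribute assignments on `L` evaluates every
inner product as `c₁ * c₂ * ∏ ℓ, (1 + ∑ x, f₁ x ℓ * f₂ x ℓ)`. In the normalised ratio the
constants cancel against the square roots of `c₁ ^ 2` and `c₂ ^ 2`, the square root of a product
of nonnegative factors splits, and the logarithm turns the remaining product over labels into a sum.
-/

open Finset

section

variable {𝕃 X R : Type*} [Fintype 𝕃] [DecidableEq 𝕃] [Fintype X] [CommSemiring R]

theorem sum_finset_sum_pi_prod_attach_eq_prod_one_add_sum (g : X → 𝕃 → R) :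
    ∑ L : Finset 𝕃, ∑ x : {a // a ∈ L} → X, ∏ ℓ ∈ L.attach, g (x ℓ) ℓ.1
      = ∏ ℓ : 𝕃, (1 + ∑ x : X, g x ℓ) := by
  rw [prod_one_add, powerset_univ]
  refine sum_congr rfl fun L _ => ?_
  rw [← prod_coe_sort, Fintype.prod_sum]
  rfl

theorem sum_finset_sum_pi_const_mul_prod_mul_const_mul_prod (c₁ c₂ : R) (g h : X → 𝕃 → R) :
    ∑ L : Finset 𝕃, ∑ x : {a // a ∈ L} → X,
        (c₁ * ∏ ℓ ∈ L.attach, g (x ℓ) ℓ.1) * (c₂ * ∏ ℓ ∈ L.attach, h (x ℓ) ℓ.1)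
      = c₁ * c₂ * ∏ ℓ : 𝕃, (1 + ∑ x : X, g x ℓ * h x ℓ) := by
  rw [← sum_finset_sum_pi_prod_attach_eq_prod_one_add_sum, mul_sum]
  simp_rw [mul_sum, prod_mul_distrib, mul_mul_mul_comm]

end

theorem Real.mul_mul_prod_div_sqrt_mul_sqrt {ι : Type*} (s : Finset ι) {c₁ c₂ : ℝ}
    (hc₁ : 0 < c₁) (hc₂ : 0 < c₂) (a b d : ι → ℝ) (hb : ∀ i ∈ s, 0 ≤ b i) (hd : ∀ i ∈ s, 0 ≤ d i) :
    c₁ * c₂ * (∏ i ∈ s, a i) / (√(c₁ ^ 2 * ∏ i ∈ s, b i) * √(c₂ ^ 2 * ∏ i ∈ s, d i))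
      = ∏ i ∈ s, a i / (√(b i) * √(d i)) := by
  rw [Real.sqrt_mul (sq_nonneg c₁), Real.sqrt_mul (sq_nonneg c₂), Real.sqrt_sq hc₁.le,
    Real.sqrt_sq hc₂.le, Real.sqrt_prod s hb, Real.sqrt_prod s hd, prod_div_distrib,
    prod_mul_distrib]
  field_simp

theorem lmb_cauchySchwarz_divergence_closed_form_general
    {𝕃 X : Type*} [Fintype 𝕃] [DecidableEq 𝕃] [Fintype X]
    (r₁ r₂ : 𝕃 → ℝ) (p₁ p₂ : X → 𝕃 → ℝ)
    (hr₁0 : ∀ ℓ, 0 ≤ r₁ ℓ) (hr₁1 : ∀ ℓ, r₁ ℓ < 1)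
    (hr₂0 : ∀ ℓ, 0 ≤ r₂ ℓ) (hr₂1 : ∀ ℓ, r₂ ℓ < 1)
    (hp₁0 : ∀ x ℓ, 0 ≤ p₁ x ℓ)
    (hp₂0 : ∀ x ℓ, 0 ≤ p₂ x ℓ)
    (f₁ f₂ : X → 𝕃 → ℝ)
    (hf₁ : ∀ x ℓ, f₁ x ℓ = r₁ ℓ * p₁ x ℓ / (1 - r₁ ℓ))
    (hf₂ : ∀ x ℓ, f₂ x ℓ = r₂ ℓ * p₂ x ℓ / (1 - r₂ ℓ))
    (π₁ π₂ : (L : Finset 𝕃) → ({a // a ∈ L} → X) → ℝ)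
    (hπ₁ : ∀ L x, π₁ L x = (∏ ℓ : 𝕃, (1 - r₁ ℓ)) * ∏ ℓ ∈ L.attach, f₁ (x ℓ) ℓ.1)
    (hπ₂ : ∀ L x, π₂ L x = (∏ ℓ : 𝕃, (1 - r₂ ℓ)) * ∏ ℓ ∈ L.attach, f₂ (x ℓ) ℓ.1) :
    -Real.log
        ((∑ L : Finset 𝕃, ∑ x : {a // a ∈ L} → X, π₁ L x * π₂ L x) /
          (Real.sqrt (∑ L : Finset 𝕃, ∑ x : {a // a ∈ L} → X, π₁ L x * π₁ L x) *
            Real.sqrt (∑ L : Finset 𝕃, ∑ x : {a // a ∈ L} → X, π₂ L x * π₂ L x)))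
      = -∑ ℓ : 𝕃,
          Real.log
            ((1 + ∑ x : X, f₁ x ℓ * f₂ x ℓ) /
              (Real.sqrt (1 + ∑ x : X, f₁ x ℓ ^ 2) *
                Real.sqrt (1 + ∑ x : X, f₂ x ℓ ^ 2))) := by
  obtain rfl : π₁ = _ := funext₂ hπ₁
  obtain rfl : π₂ = _ := funext₂ hπ₂
  have hf₁0 : ∀ x ℓ, 0 ≤ f₁ x ℓ := fun x ℓ => by
    rw [hf₁]; exact div_nonneg (mul_nonneg (hr₁0 ℓ) (hp₁0 x ℓ)) (sub_nonneg.2 (hr₁1 ℓ).le)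
  have hf₂0 : ∀ x ℓ, 0 ≤ f₂ x ℓ := fun x ℓ => by
    rw [hf₂]; exact div_nonneg (mul_nonneg (hr₂0 ℓ) (hp₂0 x ℓ)) (sub_nonneg.2 (hr₂1 ℓ).le)
  have hC₁ : 0 < ∏ ℓ : 𝕃, (1 - r₁ ℓ) := prod_pos fun ℓ _ => sub_pos.2 (hr₁1 ℓ)
  have hC₂ : 0 < ∏ ℓ : 𝕃, (1 - r₂ ℓ) := prod_pos fun ℓ _ => sub_pos.2 (hr₂1 ℓ)
  simp only [sum_finset_sum_pi_const_mul_prod_mul_const_mul_prod]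
  simp only [← pow_two]
  rw [Real.mul_mul_prod_div_sqrt_mul_sqrt _ hC₁ hC₂ _ _ _ (fun ℓ _ => by positivity)
    (fun ℓ _ => by positivity), Real.log_prod]
  intro ℓ _
  have hA : 0 < 1 + ∑ x : X, f₁ x ℓ * f₂ x ℓ :=
    add_pos_of_pos_of_nonneg one_pos (sum_nonneg fun x _ => mul_nonneg (hf₁0 x ℓ) (hf₂0 x ℓ))
  exact div_ne_zero hA.ne' (by positivity)

/-- Closed form of the Cauchy–Schwarz divergence between two labeled multi-Bernoullis
(discrete attribute space, unit U = 1). -/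
theorem lmb_cauchySchwarz_divergence_closed_form
    {𝕃 X : Type*} [Fintype 𝕃] [DecidableEq 𝕃] [Fintype X]
    (r₁ r₂ : 𝕃 → ℝ) (p₁ p₂ : X → 𝕃 → ℝ)
    (hr₁0 : ∀ ℓ, 0 ≤ r₁ ℓ) (hr₁1 : ∀ ℓ, r₁ ℓ < 1)
    (hr₂0 : ∀ ℓ, 0 ≤ r₂ ℓ) (hr₂1 : ∀ ℓ, r₂ ℓ < 1)
    (hp₁0 : ∀ x ℓ, 0 ≤ p₁ x ℓ) (hp₁1 : ∀ ℓ, ∑ x : X, p₁ x ℓ = 1)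
    (hp₂0 : ∀ x ℓ, 0 ≤ p₂ x ℓ) (hp₂1 : ∀ ℓ, ∑ x : X, p₂ x ℓ = 1)
    (f₁ f₂ : X → 𝕃 → ℝ)
    (hf₁ : ∀ x ℓ, f₁ x ℓ = r₁ ℓ * p₁ x ℓ / (1 - r₁ ℓ))
    (hf₂ : ∀ x ℓ, f₂ x ℓ = r₂ ℓ * p₂ x ℓ / (1 - r₂ ℓ))
    (π₁ π₂ : (L : Finset 𝕃) → ({a // a ∈ L} → X) → ℝ)
    (hπ₁ : ∀ L x, π₁ L x = (∏ ℓ : 𝕃, (1 - r₁ ℓ)) * ∏ ℓ ∈ L.attach, f₁ (x ℓ) ℓ.1)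
    (hπ₂ : ∀ L x, π₂ L x = (∏ ℓ : 𝕃, (1 - r₂ ℓ)) * ∏ ℓ ∈ L.attach, f₂ (x ℓ) ℓ.1) :
    -Real.log
        ((∑ L : Finset 𝕃, ∑ x : {a // a ∈ L} → X, π₁ L x * π₂ L x) /
          (Real.sqrt (∑ L : Finset 𝕃, ∑ x : {a // a ∈ L} → X, π₁ L x * π₁ L x) *
            Real.sqrt (∑ L : Finset 𝕃, ∑ x : {a // a ∈ L} → X, π₂ L x * π₂ L x)))
      = -∑ ℓ : 𝕃,
          Real.log
            ((1 + ∑ x : X, f₁ x ℓ * f₂ x ℓ) /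
              (Real.sqrt (1 + ∑ x : X, f₁ x ℓ ^ 2) *
                Real.sqrt (1 + ∑ x : X, f₂ x ℓ ^ 2))) :=
  lmb_cauchySchwarz_divergence_closed_form_general r₁ r₂ p₁ p₂ hr₁0 hr₁1 hr₂0 hr₂1 hp₁0 hp₂0 f₁ f₂
    hf₁ hf₂ π₁ π₂ hπ₁ hπ₂
end

section
/- Bhattacharyya distance between two labeled multi-Bernoullis (discrete attribute space): with f_i = r_i p_i/(1−r_i) as in the LMB setup, −ln Σ_{L⊆𝕃} Σ over attribute assignments of √(π₁·π₂) = −Σ_{ℓ∈𝕃} ln[ √((1−r₁(ℓ))(1−r₂(ℓ))) · (1 + Σ_x √(f₁(x,ℓ)f₂(x,ℓ))) ]. -/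
lemma sqrt_finset_prod {ι : Type*} (s : Finset ι) (f : ι → ℝ)
    (hf : ∀ i ∈ s, 0 ≤ f i) :
    Real.sqrt (∏ i ∈ s, f i) = ∏ i ∈ s, Real.sqrt (f i) := by
  induction s using Finset.cons_induction with
  | empty => simp
  | cons a s ha ih =>
    rw [Finset.prod_cons, Finset.prod_cons,
      Real.sqrt_mul (hf a (Finset.mem_cons_self a s)),
      ih (fun i hi => hf i (Finset.mem_cons_of_mem hi))]

/-- Bhattacharyya distance between two labeled multi-Bernoullis
(discrete attribute space). -/
theorem lmb_bhattacharyya_distance_closed_form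
    {𝕃 X : Type*} [Fintype 𝕃] [DecidableEq 𝕃] [Fintype X]
    (r₁ r₂ : 𝕃 → ℝ) (p₁ p₂ : X → 𝕃 → ℝ)
    (hr₁0 : ∀ ℓ, 0 ≤ r₁ ℓ) (hr₁1 : ∀ ℓ, r₁ ℓ < 1)
    (hr₂0 : ∀ ℓ, 0 ≤ r₂ ℓ) (hr₂1 : ∀ ℓ, r₂ ℓ < 1)
    (hp₁0 : ∀ x ℓ, 0 ≤ p₁ x ℓ) (hp₁1 : ∀ ℓ, ∑ x : X, p₁ x ℓ = 1)
    (hp₂0 : ∀ x ℓ, 0 ≤ p₂ x ℓ) (hp₂1 : ∀ ℓ, ∑ x : X, p₂ x ℓ = 1)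
    (f₁ f₂ : X → 𝕃 → ℝ)
    (hf₁ : ∀ x ℓ, f₁ x ℓ = r₁ ℓ * p₁ x ℓ / (1 - r₁ ℓ))
    (hf₂ : ∀ x ℓ, f₂ x ℓ = r₂ ℓ * p₂ x ℓ / (1 - r₂ ℓ)) :
    -Real.log
        (∑ L : Finset 𝕃, ∑ x : {a // a ∈ L} → X,
          Real.sqrt
            (((∏ ℓ : 𝕃, (1 - r₁ ℓ)) * ∏ ℓ ∈ L.attach, f₁ (x ℓ) ℓ.1) *
              ((∏ ℓ : 𝕃, (1 - r₂ ℓ)) * ∏ ℓ ∈ L.attach, f₂ (x ℓ) ℓ.1)))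
      = -∑ ℓ : 𝕃,
          Real.log
            (Real.sqrt ((1 - r₁ ℓ) * (1 - r₂ ℓ)) *
              (1 + ∑ x : X, Real.sqrt (f₁ x ℓ * f₂ x ℓ))) := by
  have hr₁ : ∀ ℓ, (0:ℝ) < 1 - r₁ ℓ := fun ℓ => by linarith [hr₁1 ℓ]
  have hr₂ : ∀ ℓ, (0:ℝ) < 1 - r₂ ℓ := fun ℓ => by linarith [hr₂1 ℓ]
  have hf₁0 : ∀ x ℓ, 0 ≤ f₁ x ℓ := fun x ℓ => by
    rw [hf₁]; exact div_nonneg (mul_nonneg (hr₁0 ℓ) (hp₁0 x ℓ)) (hr₁ ℓ).le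
  have hf₂0 : ∀ x ℓ, 0 ≤ f₂ x ℓ := fun x ℓ => by
    rw [hf₂]; exact div_nonneg (mul_nonneg (hr₂0 ℓ) (hp₂0 x ℓ)) (hr₂ ℓ).le
  set c : 𝕃 → ℝ := fun ℓ => Real.sqrt ((1 - r₁ ℓ) * (1 - r₂ ℓ)) with hc
  set S : 𝕃 → ℝ := fun ℓ => ∑ x : X, Real.sqrt (f₁ x ℓ * f₂ x ℓ) with hS
  have hS0 : ∀ ℓ, 0 ≤ S ℓ := fun ℓ =>
    Finset.sum_nonneg fun x _ => Real.sqrt_nonneg _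
  -- main sum identity
  have key : (∑ L : Finset 𝕃, ∑ x : {a // a ∈ L} → X,
          Real.sqrt
            (((∏ ℓ : 𝕃, (1 - r₁ ℓ)) * ∏ ℓ ∈ L.attach, f₁ (x ℓ) ℓ.1) *
              ((∏ ℓ : 𝕃, (1 - r₂ ℓ)) * ∏ ℓ ∈ L.attach, f₂ (x ℓ) ℓ.1)))
      = ∏ ℓ : 𝕃, (c ℓ * (1 + S ℓ)) := by
    have hA : (0:ℝ) ≤ ∏ ℓ : 𝕃, (1 - r₁ ℓ) :=
      Finset.prod_nonneg fun ℓ _ => (hr₁ ℓ).le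
    have step1 : ∀ (L : Finset 𝕃) (x : {a // a ∈ L} → X),
        Real.sqrt
            (((∏ ℓ : 𝕃, (1 - r₁ ℓ)) * ∏ ℓ ∈ L.attach, f₁ (x ℓ) ℓ.1) *
              ((∏ ℓ : 𝕃, (1 - r₂ ℓ)) * ∏ ℓ ∈ L.attach, f₂ (x ℓ) ℓ.1))
        = Real.sqrt ((∏ ℓ : 𝕃, (1 - r₁ ℓ)) * (∏ ℓ : 𝕃, (1 - r₂ ℓ))) *
            ∏ ℓ ∈ L.attach, Real.sqrt (f₁ (x ℓ) ℓ.1 * f₂ (x ℓ) ℓ.1) := by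
      intro L x
      have h1 : (((∏ ℓ : 𝕃, (1 - r₁ ℓ)) * ∏ ℓ ∈ L.attach, f₁ (x ℓ) ℓ.1) *
              ((∏ ℓ : 𝕃, (1 - r₂ ℓ)) * ∏ ℓ ∈ L.attach, f₂ (x ℓ) ℓ.1))
          = ((∏ ℓ : 𝕃, (1 - r₁ ℓ)) * (∏ ℓ : 𝕃, (1 - r₂ ℓ))) *
              ∏ ℓ ∈ L.attach, (f₁ (x ℓ) ℓ.1 * f₂ (x ℓ) ℓ.1) := by
        rw [Finset.prod_mul_distrib]; ring
      rw [h1, Real.sqrt_mul (mul_nonneg hA (Finset.prod_nonneg fun ℓ _ => (hr₂ ℓ).le)),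
        sqrt_finset_prod _ _ (fun i _ => mul_nonneg (hf₁0 _ _) (hf₂0 _ _))]
    calc (∑ L : Finset 𝕃, ∑ x : {a // a ∈ L} → X,
          Real.sqrt
            (((∏ ℓ : 𝕃, (1 - r₁ ℓ)) * ∏ ℓ ∈ L.attach, f₁ (x ℓ) ℓ.1) *
              ((∏ ℓ : 𝕃, (1 - r₂ ℓ)) * ∏ ℓ ∈ L.attach, f₂ (x ℓ) ℓ.1)))
        = Real.sqrt ((∏ ℓ : 𝕃, (1 - r₁ ℓ)) * (∏ ℓ : 𝕃, (1 - r₂ ℓ))) *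
            ∑ L : Finset 𝕃, ∏ ℓ ∈ L, S ℓ := by
          rw [Finset.mul_sum]
          refine Finset.sum_congr rfl fun L _ => ?_
          simp only [step1]
          rw [← Finset.mul_sum]
          congr 1
          have := Fintype.prod_sum (κ := fun _ : {a // a ∈ L} => X)
            (fun ℓ y => Real.sqrt (f₁ y ℓ.1 * f₂ y ℓ.1))
          rw [Finset.univ_eq_attach] at this
          rw [← this, ← Finset.prod_attach L (fun ℓ => S ℓ)]
      _ = (∏ ℓ : 𝕃, c ℓ) * ∏ ℓ : 𝕃, (1 + S ℓ) := by
          congr 1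
          · rw [← Finset.prod_mul_distrib,
              sqrt_finset_prod _ _ (fun ℓ _ => mul_nonneg (hr₁ ℓ).le (hr₂ ℓ).le)]
          · rw [← Finset.powerset_univ]
            have := Finset.prod_add (fun ℓ : 𝕃 => S ℓ) (fun _ => (1:ℝ)) Finset.univ
            simp only [Finset.prod_const_one, mul_one] at this
            rw [← this]
            exact Finset.prod_congr rfl fun ℓ _ => by ring
      _ = ∏ ℓ : 𝕃, (c ℓ * (1 + S ℓ)) := (Finset.prod_mul_distrib).symm
  rw [key, Real.log_prod]
  · intro ℓ _
    have hc0 : 0 < c ℓ := Real.sqrt_pos.2 (mul_pos (hr₁ ℓ) (hr₂ ℓ))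
    have : 0 < 1 + S ℓ := by linarith [hS0 ℓ]
    positivity
end

section
/- PHD of an LMB (discrete case): for an LMB with parameters r : 𝕃 → [0,1) and pmfs p(·,ℓ), the intensity at (x,ℓ), defined as v(x,ℓ) = Σ_{L⊆𝕃, ℓ∈L} Σ over attribute assignments y with y(ℓ) = x of π({(y(ℓ'),ℓ') : ℓ'∈L}), equals r(ℓ)·p(x,ℓ). -/
/-!
With the attribute of `ℓ₀` fixed to `x₀` and the others summed freely, the inner sum factorises as
`f x₀ ℓ₀ * ∏_{ℓ ∈ L \ {ℓ₀}} r ℓ / (1 - r ℓ)`, because each `p · ℓ` sums to `1`. Summing over the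
label sets containing `ℓ₀` gives `∏_{ℓ ≠ ℓ₀} (r ℓ / (1 - r ℓ) + 1) = ∏_{ℓ ≠ ℓ₀} (1 - r ℓ)⁻¹`, which
cancels the normalising constant `∏ ℓ, (1 - r ℓ)` up to the factor `1 - r ℓ₀`, and
`(1 - r ℓ₀) * f x₀ ℓ₀ = r ℓ₀ * p x₀ ℓ₀`.
-/

open Finset

theorem sum_filter_apply_eq_prod {ι X R : Type*} [Fintype ι] [DecidableEq ι] [Fintype X]
    [DecidableEq X] [CommSemiring R] (g : X → ι → R) (i : ι) (a : X) :
    ∑ y ∈ univ.filter (fun y : ι → X => y i = a), ∏ j, g (y j) j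
      = g a i * ∏ j ∈ univ.erase i, ∑ x, g x j := by
  -- Restricting `g · i` to `a` turns the constrained sum into an unconstrained one, which factorises.
  set g' : X → ι → R := fun x j => if j = i then (if x = a then g a i else 0) else g x j
  have hg' : ∀ x, ∀ j ∈ univ.erase i, g' x j = g x j := fun x j hj => if_neg (ne_of_mem_erase hj)
  calc ∑ y ∈ univ.filter (fun y : ι → X => y i = a), ∏ j, g (y j) j
      = ∑ y : ι → X, ∏ j, g' (y j) j := by
        rw [sum_filter]
        refine sum_congr rfl fun y _ => ?_
        rw [← mul_prod_erase _ _ (mem_univ i), ← mul_prod_erase _ _ (mem_univ i),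
          prod_congr rfl fun j hj => hg' (y j) j hj]
        by_cases hy : y i = a <;> simp [g', hy]
    _ = ∏ j, ∑ x, g' x j := (Fintype.prod_sum fun j x => g' x j).symm
    _ = g a i * ∏ j ∈ univ.erase i, ∑ x, g x j := by
        rw [← mul_prod_erase _ _ (mem_univ i), prod_congr rfl fun j hj => sum_congr rfl
          fun x _ => hg' x j hj]
        simp [g']

theorem sum_filter_apply_eq_prod_attach {ι X R : Type*} [DecidableEq ι] [Fintype X]
    [DecidableEq X] [CommSemiring R] (g : X → ι → R) {s : Finset ι} {i : ι} (hi : i ∈ s) (a : X) :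
    ∑ y ∈ univ.filter (fun y : s → X => y ⟨i, hi⟩ = a), ∏ j ∈ s.attach, g (y j) j
      = g a i * ∏ j ∈ s.erase i, ∑ x, g x j := by
  rw [← univ_eq_attach, sum_filter_apply_eq_prod (fun x (j : s) => g x j), univ_eq_attach,
    prod_erase_attach (fun j => ∑ x, g x j)]

theorem sum_powerset_ite_mem_erase {α M : Type*} [DecidableEq α] [AddCommMonoid M]
    (F : Finset α → M) {s : Finset α} {a : α} (ha : a ∈ s) :
    ∑ L ∈ s.powerset, (if a ∈ L then F (L.erase a) else 0) = ∑ t ∈ (s.erase a).powerset, F t := by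
  have hnot : ∀ t ∈ (s.erase a).powerset, a ∉ t := fun t ht h =>
    notMem_erase a s (mem_powerset.1 ht h)
  rw [← insert_erase ha, sum_powerset_insert (notMem_erase a s), erase_insert (notMem_erase a s),
    sum_eq_zero fun t ht => if_neg (hnot t ht), zero_add]
  exact sum_congr rfl fun t ht => by rw [if_pos (mem_insert_self a t), erase_insert (hnot t ht)]

theorem lmb_phd_general
    {𝕃 X : Type*} [Fintype 𝕃] [DecidableEq 𝕃] [Fintype X] [DecidableEq X]
    (r : 𝕃 → ℝ) (p : X → 𝕃 → ℝ)
    (hr1 : ∀ ℓ, r ℓ < 1)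
    (hp1 : ∀ ℓ, ∑ x : X, p x ℓ = 1)
    (f : X → 𝕃 → ℝ) (hf : ∀ x ℓ, f x ℓ = r ℓ * p x ℓ / (1 - r ℓ))
    (x₀ : X) (ℓ₀ : 𝕃) :
    (∑ L : Finset 𝕃,
        if hmem : ℓ₀ ∈ L then
          ∑ y ∈ Finset.univ.filter (fun y : {a // a ∈ L} → X => y ⟨ℓ₀, hmem⟩ = x₀),
            (∏ ℓ : 𝕃, (1 - r ℓ)) * ∏ ℓ ∈ L.attach, f (y ℓ) ℓ.1
        else 0)
      = r ℓ₀ * p x₀ ℓ₀ := by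
  have hne : ∀ ℓ, 1 - r ℓ ≠ 0 := fun ℓ => (sub_pos.2 (hr1 ℓ)).ne'
  have hsum : ∀ ℓ, ∑ x, f x ℓ = r ℓ / (1 - r ℓ) := fun ℓ => by
    simp only [hf, ← sum_div, ← mul_sum, hp1, mul_one]
  have hnorm :
      (∏ ℓ ∈ univ.erase ℓ₀, (1 - r ℓ)) * ∏ ℓ ∈ univ.erase ℓ₀, (r ℓ / (1 - r ℓ) + 1) = 1 := by
    rw [← prod_mul_distrib]
    exact prod_eq_one fun ℓ _ => by field_simp [hne ℓ]; ring
  have hterm : ∀ L : Finset 𝕃, (if hmem : ℓ₀ ∈ L then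
        ∑ y ∈ univ.filter (fun y : {a // a ∈ L} → X => y ⟨ℓ₀, hmem⟩ = x₀),
          (∏ ℓ : 𝕃, (1 - r ℓ)) * ∏ ℓ ∈ L.attach, f (y ℓ) ℓ.1 else 0)
      = (∏ ℓ : 𝕃, (1 - r ℓ)) * f x₀ ℓ₀ *
          if ℓ₀ ∈ L then ∏ ℓ ∈ L.erase ℓ₀, r ℓ / (1 - r ℓ) else 0 := fun L => by
    split_ifs with hmem
    · simp only [← mul_sum, sum_filter_apply_eq_prod_attach f hmem, hsum, mul_assoc]
    · rw [mul_zero]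
  rw [sum_congr rfl fun L _ => hterm L, ← mul_sum, ← powerset_univ,
    sum_powerset_ite_mem_erase (fun t => ∏ ℓ ∈ t, r ℓ / (1 - r ℓ)) (mem_univ ℓ₀), ← prod_add_one,
    ← mul_prod_erase univ (fun ℓ => 1 - r ℓ) (mem_univ ℓ₀), hf]
  field_simp [hne ℓ₀]
  linear_combination (r ℓ₀ * p x₀ ℓ₀) * hnorm

/-- PHD (intensity) of an LMB (discrete case): the intensity at a labeled point
`(x₀, ℓ₀)` equals `r ℓ₀ * p x₀ ℓ₀`. -/
theorem lmb_phd
    {𝕃 X : Type*} [Fintype 𝕃] [DecidableEq 𝕃] [Fintype X] [DecidableEq X]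
    (r : 𝕃 → ℝ) (p : X → 𝕃 → ℝ)
    (hr0 : ∀ ℓ, 0 ≤ r ℓ) (hr1 : ∀ ℓ, r ℓ < 1)
    (hp0 : ∀ x ℓ, 0 ≤ p x ℓ) (hp1 : ∀ ℓ, ∑ x : X, p x ℓ = 1)
    (f : X → 𝕃 → ℝ) (hf : ∀ x ℓ, f x ℓ = r ℓ * p x ℓ / (1 - r ℓ))
    (x₀ : X) (ℓ₀ : 𝕃) :
    (∑ L : Finset 𝕃,
        if hmem : ℓ₀ ∈ L then
          ∑ y ∈ Finset.univ.filter (fun y : {a // a ∈ L} → X => y ⟨ℓ₀, hmem⟩ = x₀),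
            (∏ ℓ : 𝕃, (1 - r ℓ)) * ∏ ℓ ∈ L.attach, f (y ℓ) ℓ.1
        else 0)
      = r ℓ₀ * p x₀ ℓ₀ :=
  lmb_phd_general r p hr1 hp1 f hf x₀ ℓ₀
end

section
/- Rényi divergence between two Poisson point processes over a finite space: for intensity functions v₁, v₂ : X → ℝ>0 on a finite set X, defining π_i(A) = e^{−Σ_x v_i(x)}·∏_{x∈A-as-multiset} v_i(x) via the Poisson structure, the Rényi divergence of order α ≠ 1 equals (⟨v₁^α, v₂^{1−α}⟩ + ln(K₁^α K₂^{1−α}))/(α−1), where K_i = e^{−Σ_x v_i(x)} and ⟨v₁^α, v₂^{1−α}⟩ = Σ_{x∈X} v₁(x)^α v₂(x)^{1−α}. Concretely: (1/(α−1))·[ Σ_x v₁(x)^α v₂(x)^{1−α} − α·Σ_x v₁(x) − (1−α)·Σ_x v₂(x) ] equals the Rényi divergence (1/(α−1))·ln Σ_{n≥0} (1/n!)·Σ_{x₁,...,xₙ} (K₁∏v₁(x_j))^α (K₂∏v₂(x_j))^{1−α}. -/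
/-- Rényi divergence between two Poisson point processes over a finite space. -/
theorem poisson_renyi_divergence_closed_form
    {X : Type*} [Fintype X] (v₁ v₂ : X → ℝ)
    (hv₁ : ∀ x, 0 < v₁ x) (hv₂ : ∀ x, 0 < v₂ x)
    (α : ℝ) (hα0 : 0 < α) (hα1 : α ≠ 1)
    (K₁ K₂ : ℝ)
    (hK₁ : K₁ = Real.exp (-∑ x : X, v₁ x)) (hK₂ : K₂ = Real.exp (-∑ x : X, v₂ x)) :
    (1 / (α - 1)) *
        Real.log
          (∑' n : ℕ, (1 / (n.factorial : ℝ)) *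
            ∑ x : Fin n → X,
              (K₁ * ∏ j : Fin n, v₁ (x j)) ^ α *
                (K₂ * ∏ j : Fin n, v₂ (x j)) ^ (1 - α))
      = (1 / (α - 1)) *
          ((∑ x : X, v₁ x ^ α * v₂ x ^ (1 - α)) -
            α * ∑ x : X, v₁ x - (1 - α) * ∑ x : X, v₂ x) := by
  have hK₁' : 0 < K₁ := hK₁ ▸ Real.exp_pos _
  have hK₂' : 0 < K₂ := hK₂ ▸ Real.exp_pos _
  set S : ℝ := ∑ x : X, v₁ x ^ α * v₂ x ^ (1 - α) with hS
  -- simplify inner sum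
  have hinner : ∀ n : ℕ, (∑ x : Fin n → X,
      (K₁ * ∏ j : Fin n, v₁ (x j)) ^ α *
        (K₂ * ∏ j : Fin n, v₂ (x j)) ^ (1 - α))
      = K₁ ^ α * K₂ ^ (1 - α) * S ^ n := by
    intro n
    have : ∀ x : Fin n → X,
        (K₁ * ∏ j : Fin n, v₁ (x j)) ^ α *
          (K₂ * ∏ j : Fin n, v₂ (x j)) ^ (1 - α)
        = K₁ ^ α * K₂ ^ (1 - α) * ∏ j : Fin n, (v₁ (x j) ^ α * v₂ (x j) ^ (1 - α)) := by
      intro x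
      rw [Real.mul_rpow hK₁'.le (Finset.prod_nonneg fun j _ => (hv₁ (x j)).le),
        Real.mul_rpow hK₂'.le (Finset.prod_nonneg fun j _ => (hv₂ (x j)).le),
        ← Real.finset_prod_rpow _ _ (fun j _ => (hv₁ (x j)).le),
        ← Real.finset_prod_rpow _ _ (fun j _ => (hv₂ (x j)).le),
        Finset.prod_mul_distrib]
      ring
    simp_rw [this, ← Finset.mul_sum]
    congr 1
    rw [← Fintype.piFinset_univ]
    exact (Finset.prod_univ_sum (fun _ : Fin n => (Finset.univ : Finset X))
      (fun _ y => v₁ y ^ α * v₂ y ^ (1 - α))).symm.trans (by simp [hS])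
  have htsum : (∑' n : ℕ, (1 / (n.factorial : ℝ)) *
      ∑ x : Fin n → X,
        (K₁ * ∏ j : Fin n, v₁ (x j)) ^ α *
          (K₂ * ∏ j : Fin n, v₂ (x j)) ^ (1 - α))
      = K₁ ^ α * K₂ ^ (1 - α) * Real.exp S := by
    simp_rw [hinner]
    rw [show (Real.exp S) = ∑' n : ℕ, S ^ n / n.factorial by
      rw [Real.exp_eq_exp_ℝ, NormedSpace.exp_eq_tsum_div], ← tsum_mul_left]
    congr 1; funext n; ring
  rw [htsum, Real.log_mul (by positivity) (Real.exp_pos _).ne',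
    Real.log_mul (by positivity) (by positivity),
    Real.log_rpow hK₁', Real.log_rpow hK₂', Real.log_exp, hK₁, hK₂,
    Real.log_exp, Real.log_exp]
  ring
end

section
/- Factorization of the generating functional of an LMB (discrete case): for an LMB with r : 𝕃 → [0,1) and pmfs p(·,ℓ) on finite X, and any test function h : X × 𝕃 → [0,1], Σ_{L⊆𝕃} Σ over attribute assignments x of π({(x(ℓ),ℓ):ℓ∈L})·∏_{ℓ∈L} h(x(ℓ),ℓ) = ∏_{ℓ∈𝕃} (1 − r(ℓ) + r(ℓ)·Σ_{y∈X} p(y,ℓ)h(y,ℓ)). -/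
/-!
Dividing out `∏ ℓ, (1 - r ℓ)`, the LMB weight of a labelled set is a product over its labels, so
for a fixed label set `L` the sum over attribute assignments `x : L → X` factorizes label by
label into `∏ ℓ ∈ L, r ℓ ∑ y, p y ℓ h y ℓ` times `∏ ℓ ∉ L, (1 - r ℓ)`. Summing over `L` is then
the expansion of `∏ ℓ, (r ℓ ∑ y, p y ℓ h y ℓ + (1 - r ℓ))` over subsets.
-/

open Finset

theorem sum_fun_prod_attach_eq_prod_sum {ι X R : Type*} [DecidableEq ι] [Fintype X]
    [CommSemiring R] (s : Finset ι) (w : X → ι → R) :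
    ∑ x : s → X, ∏ i ∈ s.attach, w (x i) i = ∏ i ∈ s, ∑ y, w y i := by
  rw [← prod_attach s (fun i => ∑ y, w y i), ← univ_eq_attach, Fintype.prod_sum]

theorem prod_univ_mul_prod_div_eq {ι K : Type*} [Fintype ι] [DecidableEq ι] [Field K]
    (f g : ι → K) (s : Finset ι) (hg : ∀ i ∈ s, g i ≠ 0) :
    (∏ i, g i) * ∏ i ∈ s, f i / g i = (∏ i ∈ s, f i) * ∏ i ∈ univ \ s, g i := by
  rw [← prod_sdiff (subset_univ s), prod_div_distrib, mul_assoc,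
    mul_div_cancel₀ _ (prod_ne_zero_iff.2 hg), mul_comm]

theorem lmb_pgfl_factorization_general
    {𝕃 X : Type*} [Fintype 𝕃] [DecidableEq 𝕃] [Fintype X]
    (r : 𝕃 → ℝ) (p : X → 𝕃 → ℝ) (h : X → 𝕃 → ℝ)
    (hr1 : ∀ ℓ, r ℓ < 1) :
    ∑ L : Finset 𝕃, ∑ x : {a // a ∈ L} → X,
        ((∏ ℓ : 𝕃, (1 - r ℓ)) *
            ∏ ℓ ∈ L.attach, r ℓ.1 * p (x ℓ) ℓ.1 / (1 - r ℓ.1)) *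
          ∏ ℓ ∈ L.attach, h (x ℓ) ℓ.1
      = ∏ ℓ : 𝕃, (1 - r ℓ + r ℓ * ∑ y : X, p y ℓ * h y ℓ) := by
  set S : 𝕃 → ℝ := fun ℓ => ∑ y, p y ℓ * h y ℓ
  have hlabel : ∀ ℓ, ∑ y, r ℓ * p y ℓ / (1 - r ℓ) * h y ℓ = r ℓ * S ℓ / (1 - r ℓ) := by
    intro ℓ
    rw [mul_sum, sum_div]
    exact sum_congr rfl fun y _ => by ring
  have hL : ∀ L : Finset 𝕃, ∑ x : L → X,
      ((∏ ℓ, (1 - r ℓ)) * ∏ ℓ ∈ L.attach, r ℓ.1 * p (x ℓ) ℓ.1 / (1 - r ℓ.1)) *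
        ∏ ℓ ∈ L.attach, h (x ℓ) ℓ.1
      = (∏ ℓ ∈ L, r ℓ * S ℓ) * ∏ ℓ ∈ univ \ L, (1 - r ℓ) := by
    intro L
    simp_rw [mul_assoc, ← prod_mul_distrib, ← mul_sum]
    rw [sum_fun_prod_attach_eq_prod_sum L (fun y ℓ => r ℓ * p y ℓ / (1 - r ℓ) * h y ℓ)]
    simp_rw [hlabel]
    exact prod_univ_mul_prod_div_eq _ _ L fun ℓ _ => sub_ne_zero.2 (hr1 ℓ).ne'
  rw [sum_congr rfl fun L _ => hL L, ← powerset_univ, ← prod_add]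
  exact prod_congr rfl fun ℓ _ => by ring

/-- Factorization of the probability generating functional of an LMB (discrete case). -/
theorem lmb_pgfl_factorization
    {𝕃 X : Type*} [Fintype 𝕃] [DecidableEq 𝕃] [Fintype X]
    (r : 𝕃 → ℝ) (p : X → 𝕃 → ℝ) (h : X → 𝕃 → ℝ)
    (hr0 : ∀ ℓ, 0 ≤ r ℓ) (hr1 : ∀ ℓ, r ℓ < 1)
    (hp0 : ∀ x ℓ, 0 ≤ p x ℓ) (hp1 : ∀ ℓ, ∑ x : X, p x ℓ = 1)
    (hh0 : ∀ x ℓ, 0 ≤ h x ℓ) (hh1 : ∀ x ℓ, h x ℓ ≤ 1) :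
    ∑ L : Finset 𝕃, ∑ x : {a // a ∈ L} → X,
        ((∏ ℓ : 𝕃, (1 - r ℓ)) *
            ∏ ℓ ∈ L.attach, r ℓ.1 * p (x ℓ) ℓ.1 / (1 - r ℓ.1)) *
          ∏ ℓ ∈ L.attach, h (x ℓ) ℓ.1
      = ∏ ℓ : 𝕃, (1 - r ℓ + r ℓ * ∑ y : X, p y ℓ * h y ℓ) :=
  lmb_pgfl_factorization_general r p h hr1
end
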